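/- Fix constants C ∈ ℝ and τ > 0, and for n large set R = 2·log(n) + C, ρ(n) = R − log((π/2)·e^{C/2}·γ(n,τ)), θ_n = arccos((cosh(ρ(n))² − cosh(R))/sinh(ρ(n))²), and p_n = θ_n/(2π). Then for all sufficiently large n: 1 − e^{−γ(n,τ)/4} ≤ 1 − (1 − p_n)^n ≤ exp(−e^{−γ(n,τ)}). -/

import Mathlib

open Filter

/-- Twice iterated natural logarithm. -/
noncomputable def loglog (n : ℕ) : ℝ := Real.log (Real.log n)

/-- Thrice iterated natural logarithm. -/
noncomputable def logloglog (n : ℕ) : ℝ := Real.log (Real.log (Real.log n))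

/-- `γ(n, τ) = log(τ·log^{(2)}(n) / (2·(log^{(3)}(n))²))`. -/
noncomputable def gam (n : ℕ) (τ : ℝ) : ℝ :=
  Real.log (τ * loglog n / (2 * (logloglog n) ^ 2))

/-- The radius `R = 2·log n + C` of the hyperbolic disk. -/
noncomputable def bigR (C : ℝ) (n : ℕ) : ℝ := 2 * Real.log n + C

/-- The threshold radius `ρ(n) = R − log((π/2)·e^{C/2}·γ(n,τ))`. -/
noncomputable def rho (C τ : ℝ) (n : ℕ) : ℝ :=
  bigR C n - Real.log (Real.pi / 2 * Real.exp (C / 2) * gam n τ)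

/-- `θ_n`, the maximal angular distance at which two points of radius `ρ(n)` are
adjacent in the hyperbolic disk of radius `R`. -/
noncomputable def theta (C τ : ℝ) (n : ℕ) : ℝ :=
  Real.arccos ((Real.cosh (rho C τ n) ^ 2 - Real.cosh (bigR C n)) /
    Real.sinh (rho C τ n) ^ 2)

/-!
With `W = π γ / n` one has `ρ = R / 2 + log (2 / W)`, so `e^{R - 2ρ} = W² / 4`. Since `γ → ∞`
but `γ = O(log n)`, eventually `W` is small and `ρ, R` are large; then
`1 - cos θ = (cosh R - 1) / sinh² ρ ≈ 2 e^{R - 2ρ} = W² / 2`, so `θ ≈ W` and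
`n p = n θ / (2π) ≈ γ / 2`. The bounds follow from `e^{-4p/3} ≤ 1 - p ≤ e^{-p}` for `0 ≤ p ≤ 1/4`.
-/

open Real Set Topology

lemma one_sub_pow_le_exp_neg_mul {p : ℝ} (hp1 : p ≤ 1) (n : ℕ) :
    (1 - p) ^ n ≤ exp (-(n * p)) := by
  rw [neg_mul_eq_mul_neg, exp_nat_mul]
  exact pow_le_pow_left₀ (by linarith) (one_sub_le_exp_neg p) n

-- `(1 - p) * (1 + 4/3 p) = 1 + p/3 - 4/3 p² ≥ 1` exactly when `p ≤ 1/4`.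
lemma exp_neg_le_one_sub {p : ℝ} (hp0 : 0 ≤ p) (hp : p ≤ 1 / 4) :
    exp (-(4 / 3 * p)) ≤ 1 - p := by
  have h := add_one_le_exp (4 / 3 * p)
  rw [exp_neg, inv_le_iff_one_le_mul₀ (exp_pos _)]
  nlinarith

lemma exp_neg_mul_le_one_sub_pow {p : ℝ} (hp0 : 0 ≤ p) (hp : p ≤ 1 / 4) (n : ℕ) :
    exp (-(4 / 3 * (n * p))) ≤ (1 - p) ^ n := by
  rw [mul_left_comm, neg_mul_eq_mul_neg, exp_nat_mul]
  exact pow_le_pow_left₀ (exp_nonneg _) (exp_neg_le_one_sub hp0 hp) n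

lemma one_sub_one_sub_pow_mem_Icc {p γ : ℝ} {n : ℕ} (hp0 : 0 ≤ p) (hp : p ≤ 1 / 4)
    (hlo : γ / 4 ≤ n * p) (hhi : n * p ≤ 3 / 4 * γ) :
    1 - exp (-γ / 4) ≤ 1 - (1 - p) ^ n ∧ 1 - (1 - p) ^ n ≤ exp (-exp (-γ)) := by
  constructor
  · have := one_sub_pow_le_exp_neg_mul (show p ≤ 1 by linarith) n
    have := exp_le_exp.2 (show -(n * p) ≤ -γ / 4 by linarith)
    linarith
  · have := exp_neg_mul_le_one_sub_pow hp0 hp n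
    have := exp_le_exp.2 (show -γ ≤ -(4 / 3 * (n * p)) by linarith)
    linarith [one_sub_le_exp_neg (exp (-γ))]

lemma arccos_one_sub_mem_Icc {W D : ℝ} (hW0 : 0 ≤ W) (hW : W ≤ 1 / 2)
    (hlo : W ^ 2 / 3 ≤ D) (hhi : D ≤ 3 / 5 * W ^ 2) :
    arccos (1 - D) ∈ Icc (4 / 5 * W) (6 / 5 * W) := by
  have hπ := pi_gt_three
  constructor
  · have hcos : 1 - D ≤ cos (4 / 5 * W) := by
      nlinarith [one_sub_sq_div_two_le_cos (x := 4 / 5 * W)]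
    calc 4 / 5 * W = arccos (cos (4 / 5 * W)) := (arccos_cos (by positivity) (by linarith)).symm
      _ ≤ arccos (1 - D) := arccos_le_arccos hcos
  · have hcos : cos (6 / 5 * W) ≤ 1 - D := by
      have habs : |6 / 5 * W| ≤ 1 := by rw [abs_of_nonneg (by positivity)]; linarith
      have h := (abs_le.1 (cos_bound habs)).2
      rw [abs_of_nonneg (by positivity)] at h
      have hW2 : W ^ 2 ≤ 1 / 4 := by nlinarith
      nlinarith [mul_le_mul_of_nonneg_left hW2 (sq_nonneg W)]
    calc arccos (1 - D) ≤ arccos (cos (6 / 5 * W)) := arccos_le_arccos hcos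
      _ = 6 / 5 * W := arccos_cos (by positivity) (by linarith)

lemma cosh_sq_sub_cosh_div_sinh_sq {ρ R : ℝ} (hρ : sinh ρ ≠ 0) :
    (cosh ρ ^ 2 - cosh R) / sinh ρ ^ 2 = 1 - (cosh R - 1) / sinh ρ ^ 2 := by
  field_simp
  rw [cosh_sq]
  ring

lemma cosh_sub_one_div_sinh_sq_mem_Icc {ρ R : ℝ} (hρ : 10 ≤ ρ) (hR : 20 ≤ R) :
    (cosh R - 1) / sinh ρ ^ 2 ∈ Icc (9 / 5 * exp (R - 2 * ρ)) (20 / 9 * exp (R - 2 * ρ)) := by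
  have hexp : exp (R - 2 * ρ) = exp R / exp ρ ^ 2 := by
    rw [exp_sub, ← exp_nat_mul]; norm_num
  have hE : 21 ≤ exp ρ ^ 2 := by
    nlinarith [add_one_le_exp ρ]
  have hF : 21 ≤ exp R := by linarith [add_one_le_exp R]
  have hEinv : exp ρ * exp (-ρ) = 1 := by rw [← exp_add]; simp
  have hFinv : exp (-R) ≤ 1 := exp_le_one_iff.2 (by linarith)
  have hsinh : 9 / 40 * exp ρ ^ 2 ≤ sinh ρ ^ 2 ∧ sinh ρ ^ 2 ≤ exp ρ ^ 2 / 4 := by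
    rw [sinh_eq]
    constructor <;> nlinarith [exp_pos (-ρ), exp_pos ρ]
  have hcosh : 9 / 20 * exp R ≤ cosh R - 1 ∧ cosh R - 1 ≤ exp R / 2 := by
    rw [cosh_eq]
    constructor <;> linarith [exp_pos (-R)]
  have hS : 0 < sinh ρ ^ 2 := by linarith
  rw [hexp]
  constructor
  · rw [le_div_iff₀ hS, mul_div_assoc', div_mul_eq_mul_div, div_le_iff₀ (by positivity)]
    nlinarith [exp_pos R]
  · rw [div_le_iff₀ hS, mul_div_assoc', div_mul_eq_mul_div, le_div_iff₀ (by positivity)]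
    nlinarith [exp_pos R]

lemma tendsto_div_log_sq_atTop : Tendsto (fun y : ℝ => y / log y ^ 2) atTop atTop := by
  refine ((tendsto_exp_div_pow_atTop 2).comp tendsto_log_atTop).congr' ?_
  filter_upwards [eventually_gt_atTop 0] with y hy
  simp only [Function.comp_apply, exp_log hy]

lemma tendsto_loglog_atTop : Tendsto loglog atTop atTop :=
  tendsto_log_atTop.comp (tendsto_log_atTop.comp tendsto_natCast_atTop_atTop)

lemma tendsto_gam_atTop {τ : ℝ} (hτ : 0 < τ) : Tendsto (gam · τ) atTop atTop := by
  refine tendsto_log_atTop.comp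
    (((tendsto_div_log_sq_atTop.const_mul_atTop (half_pos hτ)).comp tendsto_loglog_atTop).congr
      ?_)
  intro n
  simp only [Function.comp_apply, logloglog, loglog]
  ring

lemma eventually_gam_le_mul_log {τ : ℝ} (hτ : 0 < τ) :
    ∀ᶠ n : ℕ in atTop, gam n τ ≤ τ / 2 * log n := by
  filter_upwards [tendsto_loglog_atTop.eventually_ge_atTop (exp 1)] with n hy
  have hy0 : 0 < loglog n := (exp_pos 1).trans_le hy
  have hz : 1 ≤ logloglog n := (le_log_iff_exp_le hy0).2 hy
  calc gam n τ ≤ τ * loglog n / (2 * logloglog n ^ 2) := log_le_self (by positivity)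
    _ ≤ τ * loglog n / 2 := by gcongr; nlinarith
    _ ≤ τ / 2 * log n := by
      rw [mul_div_right_comm]; gcongr; exact log_le_self (log_natCast_nonneg n)

lemma tendsto_pi_mul_gam_div_atTop {τ : ℝ} (hτ : 0 < τ) :
    Tendsto (fun n : ℕ => π * gam n τ / n) atTop (𝓝 0) := by
  have hlog : Tendsto (fun n : ℕ => log n / n) atTop (𝓝 0) :=
    (isLittleO_log_id_atTop.comp_tendsto tendsto_natCast_atTop_atTop).tendsto_div_nhds_zero
  refine tendsto_of_tendsto_of_tendsto_of_le_of_le' tendsto_const_nhds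
    (by simpa using hlog.const_mul (π * (τ / 2))) ?_ ?_
  · filter_upwards [(tendsto_gam_atTop hτ).eventually_ge_atTop 0] with n hγ
    positivity
  · filter_upwards [eventually_gam_le_mul_log hτ] with n hγ
    calc π * gam n τ / n ≤ π * (τ / 2 * log n) / n := by gcongr
      _ = π * (τ / 2) * (log n / n) := by ring

lemma tendsto_bigR_atTop (C : ℝ) : Tendsto (bigR C) atTop atTop :=
  tendsto_atTop_add_const_right _ C
    ((tendsto_log_atTop.comp tendsto_natCast_atTop_atTop).const_mul_atTop two_pos)

lemma rho_eq_half_bigR_add_log {C τ : ℝ} {n : ℕ} (hn : n ≠ 0) (hγ : 0 < gam n τ) :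
    rho C τ n = bigR C n / 2 + log (2 / (π * gam n τ / n)) := by
  have hn' : (n : ℝ) ≠ 0 := Nat.cast_ne_zero.2 hn
  rw [rho, bigR, log_div two_ne_zero (by positivity), log_div (by positivity) hn',
    log_mul pi_ne_zero hγ.ne', log_mul (by positivity) hγ.ne',
    log_mul (by positivity) (exp_ne_zero _), log_div pi_ne_zero two_ne_zero, log_exp]
  ring

lemma theta_mem_Icc {C τ : ℝ} {n : ℕ} (hn : n ≠ 0) (hγ : 0 < gam n τ)
    (hW : π * gam n τ / n ≤ 1 / 2) (hR : 20 ≤ bigR C n) :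
    theta C τ n ∈ Icc (4 / 5 * (π * gam n τ / n)) (6 / 5 * (π * gam n τ / n)) := by
  set W := π * gam n τ / n
  have hW0 : 0 < W := by positivity
  have hρ : rho C τ n = bigR C n / 2 + log (2 / W) := rho_eq_half_bigR_add_log hn hγ
  have hlog : 0 ≤ log (2 / W) := log_nonneg (by rw [le_div_iff₀ hW0]; linarith)
  have hρ10 : 10 ≤ rho C τ n := by linarith
  have hexp : exp (bigR C n - 2 * rho C τ n) = W ^ 2 / 4 := by
    rw [hρ, show bigR C n - 2 * (bigR C n / 2 + log (2 / W)) = -log (2 / W) - log (2 / W) by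
      ring, exp_sub, exp_neg, exp_log (by positivity)]
    field_simp
    ring
  obtain ⟨hlo, hhi⟩ := cosh_sub_one_div_sinh_sq_mem_Icc hρ10 hR
  rw [hexp] at hlo hhi
  rw [theta, cosh_sq_sub_cosh_div_sinh_sq (sinh_pos_iff.2 (by linarith)).ne']
  exact arccos_one_sub_mem_Icc hW0.le hW (by linarith) (by linarith)

/-- **Probability that a sector is non-empty.**
With `p_n = θ_n/(2π)` the probability that one of `n` independent uniform angles falls
in a fixed sector of width `θ_n`, for all sufficiently large `n`,
`1 − e^{−γ(n,τ)/4} ≤ 1 − (1 − p_n)^n ≤ exp(−e^{−γ(n,τ)})`. -/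
theorem prob_sector_nonempty (C τ : ℝ) (hτ : 0 < τ) :
    ∀ᶠ n : ℕ in atTop,
      1 - Real.exp (-gam n τ / 4) ≤ 1 - (1 - theta C τ n / (2 * Real.pi)) ^ n ∧
      1 - (1 - theta C τ n / (2 * Real.pi)) ^ n ≤ Real.exp (-Real.exp (-gam n τ)) := by
  filter_upwards [eventually_ne_atTop 0, (tendsto_gam_atTop hτ).eventually_gt_atTop 0,
    (tendsto_pi_mul_gam_div_atTop hτ).eventually (ge_mem_nhds (by norm_num : (0 : ℝ) < 1 / 2)),
    (tendsto_bigR_atTop C).eventually_ge_atTop 20] with n hn hγ hW hR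
  obtain ⟨hlo, hhi⟩ := theta_mem_Icc hn hγ hW hR
  have hπ := pi_gt_three
  have hn' : (0 : ℝ) < n := by positivity
  have hW0 : 0 < π * gam n τ / n := by positivity
  apply one_sub_one_sub_pow_mem_Icc
  · exact div_nonneg (by linarith [hW0]) (by positivity)
  · rw [div_le_iff₀ (by positivity)]
    linarith
  · rw [mul_div_assoc', le_div_iff₀ (by positivity)]
    calc gam n τ / 4 * (2 * π) ≤ n * (4 / 5 * (π * gam n τ / n)) := by
          field_simp
          nlinarith
      _ ≤ n * theta C τ n := by gcongr
  · rw [mul_div_assoc', div_le_iff₀ (by positivity)]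
    calc n * theta C τ n ≤ n * (6 / 5 * (π * gam n τ / n)) := by gcongr
      _ ≤ 3 / 4 * gam n τ * (2 * π) := by
          field_simp
          nlinarith
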